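/- arXiv:2207.10559 — 7 statements merged into one kernel-verified Lean document; each statement's English description precedes it below -/
import Mathlib

section
/- Let n ≥ 1, let ρ : Fin n → ℝ, and let h : Fin n → Fin n satisfy: for every i, either h i = i or ρ (h i) > ρ i. Define the root map r := h^[n−1] (the (n−1)-st iterate of h). Then for every i : Fin n: (a) r (h i) = r i, (b) r (r i) = r i, and (c) h (r i) = r i. In particular r assigns each element to the root of its tree in the graph of nearest-highers, and the assignment is invariant along nearest-higher edges. -/
/-- The root map `r := h^[n-1]` is invariant along nearest-higher edges,
idempotent, and lands on roots. -/
theorem root_map_properties (n : ℕ) (hn : 1 ≤ n) (ρ : Fin n → ℝ)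
    (h : Fin n → Fin n) (hh : ∀ i, h i = i ∨ ρ (h i) > ρ i) :
    ∀ i : Fin n,
      h^[n - 1] (h i) = h^[n - 1] i ∧
      h^[n - 1] (h^[n - 1] i) = h^[n - 1] i ∧
      h (h^[n - 1] i) = h^[n - 1] i := by
  have key : ∀ i, h (h^[n - 1] i) = h^[n - 1] i := by
    intro i
    by_contra hne
    have prop : ∀ k, k ≤ n - 1 → h (h^[k] i) ≠ h^[k] i := by
      intro k hk hfix
      apply hne
      have heq : h^[n - 1] i = h^[k] i := by
        have h2 := Function.iterate_fixed hfix (n - 1 - k)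
        calc h^[n - 1] i = h^[n - 1 - k] (h^[k] i) := by
              rw [← Function.iterate_add_apply]; congr 1; omega
          _ = h^[k] i := h2
      rw [heq]; exact hfix
    have chain : ∀ b, b ≤ n → ∀ a, a < b → ρ (h^[a] i) < ρ (h^[b] i) := by
      intro b
      induction b with
      | zero => intro _ a ha; omega
      | succ m ih =>
        intro hb a ha
        have hstep : ρ (h^[m] i) < ρ (h^[m + 1] i) := by
          rcases hh (h^[m] i) with he | hgt
          · exact absurd he (prop m (by omega))
          · rw [Function.iterate_succ_apply']; exact hgt
        rcases Nat.lt_or_ge a m with h1 | h2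
        · exact lt_trans (ih (by omega) a h1) hstep
        · have : a = m := by omega
          subst this; exact hstep
    have hinj : Function.Injective (fun j : Fin (n + 1) => h^[(j : ℕ)] i) := by
      intro a b hab
      by_contra hne2
      rcases Ne.lt_or_gt hne2 with hl | hl
      · have := chain b (by omega) a hl
        simp only at hab
        rw [hab] at this; exact lt_irrefl _ this
      · have := chain a (by omega) b hl
        simp only at hab
        rw [hab] at this; exact lt_irrefl _ this
    have := Fintype.card_le_of_injective _ hinj
    simp at this
  intro i
  have hc := key i
  have ha : h^[n - 1] (h i) = h^[n - 1] i := by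
    have he : h^[n - 1] (h i) = h (h^[n - 1] i) := by
      rw [← Function.iterate_succ_apply, Function.iterate_succ_apply']
    rw [he, hc]
  exact ⟨ha, Function.iterate_fixed hc (n - 1), hc⟩
end

section
/- Let n ≥ 2 and let M be a nonempty subset of Fin n with t = |M| and t < n. In EuclideanSpace ℂ (Fin n), define the marked and unmarked uniform superpositions a = (1/√t) Σ_{i∈M} e_i and b = (1/√(n−t)) Σ_{i∉M} e_i, the oracle O acting by (O x)_i = −x_i if i ∈ M and (O x)_i = x_i otherwise, the uniform superposition Ψ = (1/√n) Σ_{i} e_i, the reflection R x = 2⟪Ψ, x⟫ Ψ − x, and the Grover operator G = R ∘ O. Let θ = arcsin √(t/n). Then Ψ = cos θ • b + sin θ • a, and for every real φ, G (cos φ • b + sin φ • a) = cos(φ + 2θ) • b + sin(φ + 2θ) • a; that is, G acts on the plane spanned by a and b as a rotation by angle 2θ. -/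
/-!
In the plane spanned by the orthonormal pair `b, a`, write `v φ = cos φ • b + sin φ • a`. Then
`Ψ = v θ`, the oracle maps `v φ` to `v (-φ)` (reflection in the `b`-axis) and `R` maps `v β` to
`v (2θ - β)` (reflection in the line through `Ψ`). The composite of these two reflections is the
rotation `v φ ↦ v (φ + 2θ)`.
-/

open Real

section Plane

variable {E : Type*} [NormedAddCommGroup E] [InnerProductSpace ℂ E] {a b : E}

theorem inner_cos_smul_add_sin_smul (ha : ‖a‖ = 1) (hb : ‖b‖ = 1) (hba : inner ℂ b a = 0)
    (α β : ℝ) :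
    inner ℂ (cos α • b + sin α • a) (cos β • b + sin β • a) = (cos (β - α) : ℂ) := by
  have hab : inner ℂ a b = 0 := by rw [← inner_conj_symm, hba, map_zero]
  simp only [inner_add_left, inner_add_right, RCLike.real_smul_eq_coe_smul (K := ℂ),
    inner_smul_left, inner_smul_right, Complex.conj_ofReal, inner_self_eq_norm_sq_to_K, ha, hb,
    hab, hba, RCLike.ofReal_eq_complex_ofReal, cos_sub]
  push_cast
  ring

theorem reflect_cos_smul_add_sin_smul (ha : ‖a‖ = 1) (hb : ‖b‖ = 1) (hba : inner ℂ b a = 0)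
    (θ β : ℝ) :
    (2 * inner ℂ (cos θ • b + sin θ • a) (cos β • b + sin β • a)) • (cos θ • b + sin θ • a)
        - (cos β • b + sin β • a) = cos (2 * θ - β) • b + sin (2 * θ - β) • a := by
  have hcos : cos (2 * θ - β) = 2 * cos (β - θ) * cos θ - cos β := by
    have := cos_add_cos (2 * θ - β) β
    rw [show (2 * θ - β + β) / 2 = θ by ring, show (2 * θ - β - β) / 2 = -(β - θ) by ring,
      cos_neg] at this
    linarith
  have hsin : sin (2 * θ - β) = 2 * cos (β - θ) * sin θ - sin β := by
    have := sin_add_sin (2 * θ - β) β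
    rw [show (2 * θ - β + β) / 2 = θ by ring, show (2 * θ - β - β) / 2 = -(β - θ) by ring,
      cos_neg] at this
    linarith
  rw [inner_cos_smul_add_sin_smul ha hb hba, ← Complex.ofReal_ofNat, ← Complex.ofReal_mul,
    Complex.coe_smul, hcos, hsin]
  module

end Plane

theorem sin_arcsin_sqrt_div {s N : ℝ} (hs : 0 ≤ s) (hsN : s ≤ N) :
    sin (arcsin √(s / N)) = √s / √N := by
  have hN : 0 ≤ N := hs.trans hsN
  rw [sin_arcsin ((neg_nonpos.2 zero_le_one).trans (sqrt_nonneg _))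
    (sqrt_le_one.2 (div_le_one_of_le₀ hsN hN)), sqrt_div hs]

theorem cos_arcsin_sqrt_div {s N : ℝ} (hs : 0 ≤ s) (hN : 0 < N) :
    cos (arcsin √(s / N)) = √(N - s) / √N := by
  rw [cos_arcsin, sq_sqrt (div_nonneg hs hN.le), one_sub_div hN.ne', sqrt_div' _ hN.le]

section Coordinates

variable {ι : Type*}

open Finset in
theorem EuclideanSpace.norm_eq_one_of_apply_eq_inv_sqrt_card [Fintype ι] {S : Finset ι}
    (hS : S.Nonempty) {x : EuclideanSpace ℂ ι} (hxS : ∀ i ∈ S, x i = ((√(#S : ℝ))⁻¹ : ℂ))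
    (hx0 : ∀ i ∉ S, x i = 0) : ‖x‖ = 1 := by
  have hsum : ∑ i, ‖x i‖ ^ 2 = ∑ _i ∈ S, (√(#S : ℝ))⁻¹ ^ 2 := by
    rw [← sum_subset (subset_univ S) fun i _ hi => by simp [hx0 i hi]]
    exact sum_congr rfl fun i hi => by simp [hxS i hi]
  have hcard : (0 : ℝ) < #S := by exact_mod_cast hS.card_pos
  rw [EuclideanSpace.norm_eq, hsum, sum_const, nsmul_eq_mul, inv_pow, sq_sqrt hcard.le,
    mul_inv_cancel₀ hcard.ne', sqrt_one]

theorem EuclideanSpace.inner_eq_zero_of_disjoint_support [Fintype ι] {x y : EuclideanSpace ℂ ι}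
    (h : ∀ i, x i = 0 ∨ y i = 0) : inner ℂ x y = 0 := by
  rw [PiLp.inner_apply]
  exact Finset.sum_eq_zero fun i _ => by rcases h i with hx | hy <;> simp [*]

variable [DecidableEq ι] {S : Finset ι} {a b : EuclideanSpace ℂ ι}

theorem map_cos_smul_add_sin_smul_of_sign_flip
    (ha0 : ∀ i ∉ S, a i = 0) (hb0 : ∀ i ∈ S, b i = 0)
    {O : EuclideanSpace ℂ ι → EuclideanSpace ℂ ι}
    (hO : ∀ x i, O x i = if i ∈ S then -x i else x i) (φ : ℝ) :
    O (cos φ • b + sin φ • a) = cos (-φ) • b + sin (-φ) • a := by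
  ext i
  by_cases hi : i ∈ S <;> simp [hO, hi, ha0, hb0]

theorem eq_cos_arcsin_smul_add_sin_arcsin_smul [Fintype ι] {s N : ℝ} (hs : 0 < s)
    (hsN : s < N) {Ψ : EuclideanSpace ℂ ι}
    (ha : ∀ i, a i = if i ∈ S then ((√s)⁻¹ : ℂ) else 0)
    (hb : ∀ i, b i = if i ∈ S then 0 else ((√(N - s))⁻¹ : ℂ))
    (hΨ : ∀ i, Ψ i = ((√N)⁻¹ : ℂ)) :
    Ψ = cos (arcsin √(s / N)) • b + sin (arcsin √(s / N)) • a := by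
  have hN : 0 < N := hs.trans hsN
  rw [sin_arcsin_sqrt_div hs.le hsN.le, cos_arcsin_sqrt_div hs.le hN]
  have hsq : (√s : ℂ) ≠ 0 := Complex.ofReal_ne_zero.2 (sqrt_pos.2 hs).ne'
  have hNsq : (√(N - s) : ℂ) ≠ 0 := Complex.ofReal_ne_zero.2 (sqrt_pos.2 (sub_pos.2 hsN)).ne'
  ext i
  by_cases hi : i ∈ S <;> simp only [hΨ, PiLp.add_apply, PiLp.smul_apply, ha, hb, hi,
    ↓reduceIte, smul_zero, Complex.real_smul, Complex.ofReal_div, zero_add, add_zero] <;> field_simp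

end Coordinates

theorem grover_rotation_general (n : ℕ) (M : Finset (Fin n)) (hM : M.Nonempty)
    (t : ℕ) (ht : t = M.card) (htn : t < n)
    (a b Ψ : EuclideanSpace ℂ (Fin n))
    (ha : ∀ i, a i = if i ∈ M then ((Real.sqrt t)⁻¹ : ℂ) else 0)
    (hb : ∀ i, b i = if i ∈ M then 0 else ((Real.sqrt ((n : ℝ) - t))⁻¹ : ℂ))
    (hΨ : ∀ i, Ψ i = ((Real.sqrt n)⁻¹ : ℂ))
    (O R G : EuclideanSpace ℂ (Fin n) → EuclideanSpace ℂ (Fin n))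
    (hO : ∀ x, ∀ i, O x i = if i ∈ M then -x i else x i)
    (hR : ∀ x, R x = (2 * (inner ℂ Ψ x : ℂ)) • Ψ - x)
    (hG : ∀ x, G x = R (O x))
    (θ : ℝ) (hθ : θ = Real.arcsin (Real.sqrt ((t : ℝ) / n))) :
    Ψ = Real.cos θ • b + Real.sin θ • a ∧
    ∀ φ : ℝ, G (Real.cos φ • b + Real.sin φ • a) =
      Real.cos (φ + 2 * θ) • b + Real.sin (φ + 2 * θ) • a := by
  have htn' : (t : ℝ) < n := by exact_mod_cast htn
  have hcard : ((Mᶜ.card : ℕ) : ℝ) = n - t := by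
    rw [Finset.card_compl, Fintype.card_fin, ht, Nat.cast_sub (ht ▸ htn.le)]
  have ha1 : ‖a‖ = 1 := EuclideanSpace.norm_eq_one_of_apply_eq_inv_sqrt_card hM
    (fun i hi => by rw [ha, if_pos hi, ht]) fun i hi => by rw [ha, if_neg hi]
  have hMc : Mᶜ.Nonempty :=
    Finset.card_pos.1 (by rw [Finset.card_compl, Fintype.card_fin]; omega)
  have hb1 : ‖b‖ = 1 := EuclideanSpace.norm_eq_one_of_apply_eq_inv_sqrt_card hMc
    (fun i hi => by rw [hb, if_neg (Finset.mem_compl.1 hi), hcard])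
    fun i hi => by rw [hb, if_pos (Finset.notMem_compl.1 hi)]
  have hba : inner ℂ b a = 0 := EuclideanSpace.inner_eq_zero_of_disjoint_support fun i => by
    by_cases hi : i ∈ M <;> simp [ha, hb, hi]
  have hΨθ : Ψ = cos θ • b + sin θ • a := hθ ▸ eq_cos_arcsin_smul_add_sin_arcsin_smul
    (by exact_mod_cast ht ▸ hM.card_pos) htn' ha hb hΨ
  refine ⟨hΨθ, fun φ => ?_⟩
  rw [hG, map_cos_smul_add_sin_smul_of_sign_flip (fun i hi => by rw [ha, if_neg hi])
    (fun i hi => by rw [hb, if_pos hi]) hO, hR, hΨθ, reflect_cos_smul_add_sin_smul ha1 hb1 hba,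
    sub_neg_eq_add, add_comm (2 * θ)]

/-- The Grover operator acts on the plane spanned by the marked and unmarked
uniform superpositions as a rotation by angle `2θ`, where `θ = arcsin √(t/n)`. -/
theorem grover_rotation (n : ℕ) (hn : 2 ≤ n) (M : Finset (Fin n)) (hM : M.Nonempty)
    (t : ℕ) (ht : t = M.card) (htn : t < n)
    (a b Ψ : EuclideanSpace ℂ (Fin n))
    (ha : ∀ i, a i = if i ∈ M then ((Real.sqrt t)⁻¹ : ℂ) else 0)
    (hb : ∀ i, b i = if i ∈ M then 0 else ((Real.sqrt ((n : ℝ) - t))⁻¹ : ℂ))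
    (hΨ : ∀ i, Ψ i = ((Real.sqrt n)⁻¹ : ℂ))
    (O R G : EuclideanSpace ℂ (Fin n) → EuclideanSpace ℂ (Fin n))
    (hO : ∀ x, ∀ i, O x i = if i ∈ M then -x i else x i)
    (hR : ∀ x, R x = (2 * (inner ℂ Ψ x : ℂ)) • Ψ - x)
    (hG : ∀ x, G x = R (O x))
    (θ : ℝ) (hθ : θ = Real.arcsin (Real.sqrt ((t : ℝ) / n))) :
    Ψ = Real.cos θ • b + Real.sin θ • a ∧
    ∀ φ : ℝ, G (Real.cos φ • b + Real.sin φ • a) =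
      Real.cos (φ + 2 * θ) • b + Real.sin (φ + 2 * θ) • a :=
  grover_rotation_general n M hM t ht htn a b Ψ ha hb hΨ O R G hO hR hG θ hθ
end

section
/- Let n ≥ 2 and let M be a nonempty subset of Fin n with t = |M| and t < n. In EuclideanSpace ℂ (Fin n), define the oracle O acting by (O x)_i = −x_i if i ∈ M and (O x)_i = x_i otherwise, the uniform superposition Ψ = (1/√n) Σ_{i} e_i, the reflection R x = 2⟪Ψ, x⟫ Ψ − x, and the Grover operator G = R ∘ O. Let θ = arcsin √(t/n). Then for every natural number k, the probability of measuring a marked element after k Grover iterations satisfies Σ_{i∈M} ‖(G^k Ψ)_i‖² = sin²((2k+1)θ). -/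
/-!
With `|β⟩` and `|α⟩` the normalized indicator vectors of `M` and of its complement, the states
`planeVec M φ = sin φ |β⟩ + cos φ |α⟩` form an isometric copy of the unit circle, and `Ψ` is the
point at angle `θ`. The oracle sends angle `φ` to `-φ` and the reflection about `Ψ` sends `ψ` to
`2θ - ψ`, so every Grover step advances the angle by `2θ`. After `k` steps the state sits at
angle `(2k+1)θ`, whose weight on `M` is `sin²((2k+1)θ)`.
-/

open Finset

variable {ι : Type*} [Fintype ι] [DecidableEq ι]

noncomputable def planeVec (M : Finset ι) (φ : ℝ) : EuclideanSpace ℂ ι :=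
  WithLp.toLp 2 fun i =>
    if i ∈ M then ((Real.sin φ / √(#M : ℝ) : ℝ) : ℂ)
    else ((Real.cos φ / √((Fintype.card ι : ℝ) - #M) : ℝ) : ℂ)

lemma planeVec_apply (M : Finset ι) (φ : ℝ) (i : ι) :
    planeVec M φ i = if i ∈ M then ((Real.sin φ / √(#M : ℝ) : ℝ) : ℂ)
      else ((Real.cos φ / √((Fintype.card ι : ℝ) - #M) : ℝ) : ℂ) := rfl

lemma sum_norm_sq_planeVec {M : Finset ι} (hM : M.Nonempty) (φ : ℝ) :
    ∑ i ∈ M, ‖planeVec M φ i‖ ^ 2 = Real.sin φ ^ 2 := by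
  have hcard : (0 : ℝ) < #M := by exact_mod_cast hM.card_pos
  rw [sum_congr rfl fun i hi => by rw [planeVec_apply, if_pos hi], sum_const, nsmul_eq_mul,
    Complex.norm_real, Real.norm_eq_abs, sq_abs, div_pow, Real.sq_sqrt hcard.le]
  field_simp

lemma inner_planeVec {M : Finset ι} (hM : M.Nonempty) (hMc : #M < Fintype.card ι) (φ ψ : ℝ) :
    inner ℂ (planeVec M φ) (planeVec M ψ) = (Real.cos (φ - ψ) : ℂ) := by
  have hcard : (0 : ℝ) < #M := by exact_mod_cast hM.card_pos
  have hcardc : (0 : ℝ) < Fintype.card ι - #M := sub_pos.2 (by exact_mod_cast hMc)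
  have hin : ∀ i ∈ M, inner ℂ (planeVec M φ i) (planeVec M ψ i)
      = ((Real.sin ψ * Real.sin φ / #M : ℝ) : ℂ) := fun i hi => by
    rw [planeVec_apply, planeVec_apply, if_pos hi, if_pos hi, RCLike.inner_apply,
      Complex.conj_ofReal, ← Complex.ofReal_mul, div_mul_div_comm, Real.mul_self_sqrt hcard.le]
  have hout : ∀ i ∈ Mᶜ, inner ℂ (planeVec M φ i) (planeVec M ψ i)
      = ((Real.cos ψ * Real.cos φ / (Fintype.card ι - #M) : ℝ) : ℂ) := fun i hi => by
    rw [planeVec_apply, planeVec_apply, if_neg (mem_compl.1 hi), if_neg (mem_compl.1 hi),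
      RCLike.inner_apply, Complex.conj_ofReal, ← Complex.ofReal_mul, div_mul_div_comm,
      Real.mul_self_sqrt hcardc.le]
  rw [PiLp.inner_apply, ← sum_add_sum_compl M, sum_congr rfl hin, sum_congr rfl hout, sum_const,
    sum_const, card_compl, ← Complex.ofReal_nsmul, ← Complex.ofReal_nsmul, ← Complex.ofReal_add,
    nsmul_eq_mul, nsmul_eq_mul, Nat.cast_sub hMc.le, Real.cos_sub]
  congr 1
  field_simp [hcard.ne', hcardc.ne']
  ring

lemma oracle_planeVec {M : Finset ι} {O : EuclideanSpace ℂ ι → EuclideanSpace ℂ ι}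
    (hO : ∀ x i, O x i = if i ∈ M then -x i else x i) (φ : ℝ) :
    O (planeVec M φ) = planeVec M (-φ) := by
  ext i
  rw [hO, planeVec_apply, planeVec_apply, Real.sin_neg, Real.cos_neg]
  split_ifs <;> push_cast <;> ring

lemma smul_planeVec_sub_planeVec (M : Finset ι) (θ ψ : ℝ) :
    (2 * Real.cos (θ - ψ) : ℂ) • planeVec M θ - planeVec M ψ = planeVec M (2 * θ - ψ) := by
  have hsin : Real.sin (2 * θ - ψ) = 2 * Real.cos (θ - ψ) * Real.sin θ - Real.sin ψ := by
    rw [two_mul, add_sub_assoc, Real.sin_add, Real.cos_sub, Real.sin_sub]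
    linear_combination (-Real.sin ψ) * Real.sin_sq_add_cos_sq θ
  have hcos : Real.cos (2 * θ - ψ) = 2 * Real.cos (θ - ψ) * Real.cos θ - Real.cos ψ := by
    rw [two_mul, add_sub_assoc, Real.cos_add, Real.cos_sub, Real.sin_sub]
    linear_combination (-Real.cos ψ) * Real.sin_sq_add_cos_sq θ
  ext i
  simp only [PiLp.sub_apply, PiLp.smul_apply, smul_eq_mul, planeVec_apply, hsin, hcos]
  split_ifs <;> push_cast <;> ring

lemma planeVec_arcsin {M : Finset ι} (hM : M.Nonempty) (hMc : #M < Fintype.card ι) (i : ι) :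
    planeVec M (Real.arcsin √((#M : ℝ) / Fintype.card ι)) i = ((√(Fintype.card ι : ℝ))⁻¹ : ℂ) := by
  have hcard : (0 : ℝ) < #M := by exact_mod_cast hM.card_pos
  have hcardc : (0 : ℝ) < Fintype.card ι - #M := sub_pos.2 (by exact_mod_cast hMc)
  have hN : (0 : ℝ) < Fintype.card ι := by linarith
  have hle : (#M : ℝ) / Fintype.card ι ≤ 1 := (div_le_one hN).2 (by linarith)
  rw [planeVec_apply, Real.sin_arcsin (by linarith [Real.sqrt_nonneg ((#M : ℝ) / Fintype.card ι)])
    (Real.sqrt_le_one.2 hle), Real.cos_arcsin, Real.sq_sqrt (by positivity)]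
  split_ifs
  · rw [Real.sqrt_div hcard.le, div_div_cancel_left' (Real.sqrt_pos.2 hcard).ne']
    push_cast; ring
  · rw [one_sub_div hN.ne', Real.sqrt_div hcardc.le,
      div_div_cancel_left' (Real.sqrt_pos.2 hcardc).ne']
    push_cast; ring

theorem grover_success_probability_general (n : ℕ) (M : Finset (Fin n))
    (hM : M.Nonempty) (t : ℕ) (ht : t = M.card) (htn : t < n)
    (Ψ : EuclideanSpace ℂ (Fin n))
    (hΨ : ∀ i, Ψ i = ((Real.sqrt n)⁻¹ : ℂ))
    (O R G : EuclideanSpace ℂ (Fin n) → EuclideanSpace ℂ (Fin n))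
    (hO : ∀ x, ∀ i, O x i = if i ∈ M then -x i else x i)
    (hR : ∀ x, R x = (2 * (inner ℂ Ψ x : ℂ)) • Ψ - x)
    (hG : ∀ x, G x = R (O x))
    (θ : ℝ) (hθ : θ = Real.arcsin (Real.sqrt ((t : ℝ) / n))) :
    ∀ k : ℕ, ∑ i ∈ M, ‖(G^[k] Ψ) i‖ ^ 2 = Real.sin ((2 * (k : ℝ) + 1) * θ) ^ 2 := by
  subst ht
  have hMc : #M < Fintype.card (Fin n) := by rwa [Fintype.card_fin]
  have hΨθ : Ψ = planeVec M θ := by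
    ext i
    simpa only [hΨ, hθ, Fintype.card_fin] using (planeVec_arcsin hM hMc i).symm
  have hstep : Function.Semiconj (planeVec M) (· + 2 * θ) G := fun φ => by
    rw [hG, oracle_planeVec hO, hR, hΨθ, inner_planeVec hM hMc, smul_planeVec_sub_planeVec]
    ring_nf
  intro k
  rw [hΨθ, ← (hstep.iterate_right k).eq, add_right_iterate_apply, sum_norm_sq_planeVec hM]
  ring_nf

/-- The probability of measuring a marked element after `k` Grover iterations
is `sin²((2k+1)θ)`, where `θ = arcsin √(t/n)`. -/
theorem grover_success_probability (n : ℕ) (hn : 2 ≤ n) (M : Finset (Fin n))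
    (hM : M.Nonempty) (t : ℕ) (ht : t = M.card) (htn : t < n)
    (Ψ : EuclideanSpace ℂ (Fin n))
    (hΨ : ∀ i, Ψ i = ((Real.sqrt n)⁻¹ : ℂ))
    (O R G : EuclideanSpace ℂ (Fin n) → EuclideanSpace ℂ (Fin n))
    (hO : ∀ x, ∀ i, O x i = if i ∈ M then -x i else x i)
    (hR : ∀ x, R x = (2 * (inner ℂ Ψ x : ℂ)) • Ψ - x)
    (hG : ∀ x, G x = R (O x))
    (θ : ℝ) (hθ : θ = Real.arcsin (Real.sqrt ((t : ℝ) / n))) :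
    ∀ k : ℕ, ∑ i ∈ M, ‖(G^[k] Ψ) i‖ ^ 2 = Real.sin ((2 * (k : ℝ) + 1) * θ) ^ 2 :=
  grover_success_probability_general n M hM t ht htn Ψ hΨ O R G hO hR hG θ hθ
end

section
/- Let n ≥ 2 and let M be a nonempty subset of Fin n with t = |M| and t < n. In EuclideanSpace ℂ (Fin n), define the oracle O acting by (O x)_i = −x_i if i ∈ M and (O x)_i = x_i otherwise, the uniform superposition Ψ = (1/√n) Σ_{i} e_i, the reflection R x = 2⟪Ψ, x⟫ Ψ − x, and the Grover operator G = R ∘ O. Let θ = arcsin √(t/n) and set k = ⌊π/(4θ)⌋. Then the probability of measuring a marked element after k Grover iterations satisfies Σ_{i∈M} ‖(G^k Ψ)_i‖² ≥ 1 − t/n. In particular, O(√(n/t)) iterations suffice to find a marked element with high probability. -/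
/-!
The iterates of the Grover operator on `Ψ` stay in the real plane spanned by the normalised
uniform superpositions of the marked and of the unmarked basis states. Writing `ψ α`
(`groverState M α`) for the unit vector at angle `α` from the unmarked one, `Ψ = ψ θ`, the
oracle is the reflection `ψ α ↦ ψ (-α)` and the diffusion is the reflection
`ψ α ↦ ψ (2θ - α)` about `Ψ`; hence `G` rotates by `2θ`, `G^k Ψ = ψ ((2k+1)θ)`, and the marked
elements are measured with probability `sin² ((2k+1)θ)`. For `k = ⌊π/(4θ)⌋` the angle
`(2k+1)θ` lies within `θ` of `π/2`, so this probability is at least `cos² θ = 1 - t/n`.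
-/

open Finset Real

theorem sum_ite_mem_const {ι R : Type*} [Fintype ι] [DecidableEq ι] [Semiring R]
    (s : Finset ι) (a b : R) :
    ∑ i, (if i ∈ s then a else b) = #s * a + #sᶜ * b := by
  rw [← sum_add_sum_compl s, sum_congr rfl fun i hi => if_pos hi,
    sum_congr rfl fun i hi => if_neg (mem_compl.mp hi)]
  simp

theorem sin_two_mul_sub (α β : ℝ) : sin (2 * β - α) = 2 * cos (α - β) * sin β - sin α := by
  rw [sin_sub, cos_sub, sin_two_mul, cos_two_mul]
  linear_combination (-2 * sin α) * sin_sq_add_cos_sq β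

theorem cos_two_mul_sub (α β : ℝ) : cos (2 * β - α) = 2 * cos (α - β) * cos β - cos α := by
  rw [cos_sub, cos_sub, sin_two_mul, cos_two_mul]
  ring

theorem cos_arcsin_sqrt {x : ℝ} (hx : 0 ≤ x) : cos (arcsin √x) = √(1 - x) := by
  rw [cos_arcsin, sq_sqrt hx]

theorem abs_floor_angle_sub_pi_div_two_le {θ : ℝ} (hθ : 0 < θ) :
    |(2 * ⌊π / (4 * θ)⌋₊ + 1) * θ - π / 2| ≤ θ := by
  have hfloor_le :=
    (le_div_iff₀ (by positivity)).mp (Nat.floor_le (by positivity : 0 ≤ π / (4 * θ)))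
  have hlt_floor := (div_lt_iff₀ (by positivity)).mp (Nat.lt_floor_add_one (π / (4 * θ)))
  rw [abs_le]
  constructor <;> linarith

theorem cos_sq_le_sin_sq_of_abs_sub_pi_div_two_le {x θ : ℝ} (hθ : θ ≤ π / 2)
    (h : |x - π / 2| ≤ θ) : cos θ ^ 2 ≤ sin x ^ 2 := by
  have hcos : 0 ≤ cos θ := cos_nonneg_of_mem_Icc ⟨by linarith [abs_nonneg (x - π / 2)], hθ⟩
  have hle : cos θ ≤ sin x := by
    rw [← cos_sub_pi_div_two, ← cos_abs (x - π / 2)]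
    exact cos_le_cos_of_nonneg_of_le_pi (abs_nonneg _) (by linarith [pi_pos]) h
  exact pow_le_pow_left₀ hcos hle 2

noncomputable def groverState {n : ℕ} (M : Finset (Fin n)) (α : ℝ) : EuclideanSpace ℂ (Fin n) :=
  WithLp.toLp 2 fun i =>
    ((if i ∈ M then sin α / √(#M : ℝ) else cos α / √((n : ℝ) - #M) : ℝ) : ℂ)

namespace groverState

variable {n : ℕ} (M : Finset (Fin n))

theorem apply (α : ℝ) (i : Fin n) : groverState M α i =
    ((if i ∈ M then sin α / √(#M : ℝ) else cos α / √((n : ℝ) - #M) : ℝ) : ℂ) := rfl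

theorem inner_eq_cos_sub (hM : 0 < #M) (hMn : #M < n) (α β : ℝ) :
    inner ℂ (groverState M β) (groverState M α) = (cos (α - β) : ℂ) := by
  simp only [groverState, PiLp.inner_apply, RCLike.inner_apply, Complex.conj_ofReal,
    ← Complex.ofReal_mul, ← Complex.ofReal_sum, ite_mul_ite]
  rw [sum_ite_mem_const, card_compl, Fintype.card_fin, Nat.cast_sub hMn.le]
  have ht : (0 : ℝ) < #M := by exact_mod_cast hM
  have hnt : (0 : ℝ) < n - #M := by rw [sub_pos]; exact_mod_cast hMn
  congr 1
  rw [cos_sub, div_mul_div_comm, div_mul_div_comm, mul_self_sqrt ht.le, mul_self_sqrt hnt.le]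
  field_simp
  ring

theorem two_cos_smul_sub (α β : ℝ) :
    (2 * cos (α - β) : ℂ) • groverState M β - groverState M α = groverState M (2 * β - α) := by
  ext i
  simp only [PiLp.sub_apply, PiLp.smul_apply, smul_eq_mul, apply]
  split_ifs
  · rw [sin_two_mul_sub]; push_cast; ring
  · rw [cos_two_mul_sub]; push_cast; ring

theorem oracle {O : EuclideanSpace ℂ (Fin n) → EuclideanSpace ℂ (Fin n)}
    (hO : ∀ x i, O x i = if i ∈ M then -x i else x i) (α : ℝ) :
    O (groverState M α) = groverState M (-α) := by
  ext i
  rw [hO, apply, apply, sin_neg, cos_neg]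
  split_ifs <;> push_cast <;> ring

theorem reflection (hM : 0 < #M) (hMn : #M < n) {β : ℝ}
    {R : EuclideanSpace ℂ (Fin n) → EuclideanSpace ℂ (Fin n)}
    (hR : ∀ x, R x = (2 * inner ℂ (groverState M β) x) • groverState M β - x) (α : ℝ) :
    R (groverState M α) = groverState M (2 * β - α) := by
  rw [hR, inner_eq_cos_sub M hM hMn, two_cos_smul_sub]

theorem iterate_grover (hM : 0 < #M) (hMn : #M < n) {β : ℝ}
    {O R G : EuclideanSpace ℂ (Fin n) → EuclideanSpace ℂ (Fin n)}
    (hO : ∀ x i, O x i = if i ∈ M then -x i else x i)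
    (hR : ∀ x, R x = (2 * inner ℂ (groverState M β) x) • groverState M β - x)
    (hG : ∀ x, G x = R (O x)) (k : ℕ) :
    G^[k] (groverState M β) = groverState M ((2 * k + 1) * β) := by
  have hrotate : Function.Semiconj (groverState M) (· + 2 * β) G := fun α => by
    rw [hG, oracle M hO, reflection M hM hMn hR]
    congr 1
    ring
  rw [← hrotate.iterate_right k β, add_right_iterate_apply, nsmul_eq_mul]
  congr 1
  ring

theorem sum_norm_sq_marked (hM : 0 < #M) (α : ℝ) :
    ∑ i ∈ M, ‖groverState M α i‖ ^ 2 = sin α ^ 2 := by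
  have ht : (0 : ℝ) < #M := by exact_mod_cast hM
  rw [sum_congr rfl fun i hi => by rw [apply, if_pos hi], sum_const, nsmul_eq_mul,
    Complex.norm_real, norm_eq_abs, sq_abs, div_pow, sq_sqrt ht.le]
  field_simp

theorem arcsin_sqrt_apply (hM : 0 < #M) (hMn : #M < n) (i : Fin n) :
    groverState M (arcsin √(#M / n)) i = ((√n)⁻¹ : ℂ) := by
  have ht : (0 : ℝ) < #M := by exact_mod_cast hM
  have htn : (#M : ℝ) < n := by exact_mod_cast hMn
  have hsin : sin (arcsin √(#M / n)) = √(#M : ℝ) / √n := by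
    rw [sin_arcsin (by linarith [sqrt_nonneg ((#M : ℝ) / n)])
      (sqrt_le_one.mpr (div_le_one_of_le₀ htn.le (by positivity))), sqrt_div ht.le]
  have hcos : cos (arcsin √(#M / n)) = √((n : ℝ) - #M) / √n := by
    rw [cos_arcsin_sqrt (by positivity), one_sub_div (by linarith), sqrt_div (by linarith)]
  have hnt : 0 < √((n : ℝ) - #M) := sqrt_pos.mpr (by linarith)
  rw [apply, hsin, hcos, div_div_cancel_left' (sqrt_pos.mpr ht).ne',
    div_div_cancel_left' hnt.ne', ite_self, Complex.ofReal_inv]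

end groverState

theorem grover_floor_iterations_general (n : ℕ) (M : Finset (Fin n))
    (hM : M.Nonempty) (t : ℕ) (ht : t = M.card) (htn : t < n)
    (Ψ : EuclideanSpace ℂ (Fin n))
    (hΨ : ∀ i, Ψ i = ((Real.sqrt n)⁻¹ : ℂ))
    (O R G : EuclideanSpace ℂ (Fin n) → EuclideanSpace ℂ (Fin n))
    (hO : ∀ x, ∀ i, O x i = if i ∈ M then -x i else x i)
    (hR : ∀ x, R x = (2 * (inner ℂ Ψ x : ℂ)) • Ψ - x)
    (hG : ∀ x, G x = R (O x))
    (θ : ℝ) (hθ : θ = Real.arcsin (Real.sqrt ((t : ℝ) / n)))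
    (k : ℕ) (hk : k = ⌊Real.pi / (4 * θ)⌋₊) :
    ∑ i ∈ M, ‖(G^[k] Ψ) i‖ ^ 2 ≥ 1 - (t : ℝ) / n := by
  subst ht hk
  have hM : 0 < #M := card_pos.mpr hM
  obtain rfl : Ψ = groverState M θ := by
    ext i
    rw [hΨ, hθ, groverState.arcsin_sqrt_apply M hM htn]
  have hθ_pos : 0 < θ := hθ ▸ arcsin_pos.mpr (sqrt_pos.mpr
    (div_pos (by exact_mod_cast hM) (by exact_mod_cast hM.trans htn)))
  have hcos_sq : cos θ ^ 2 = 1 - (#M : ℝ) / n := by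
    have hratio : (#M : ℝ) / n ≤ 1 :=
      div_le_one_of_le₀ (by exact_mod_cast htn.le) (by positivity)
    rw [hθ, cos_arcsin_sqrt (by positivity), sq_sqrt (by linarith)]
  rw [groverState.iterate_grover M hM htn hO hR hG, groverState.sum_norm_sq_marked M hM,
    ge_iff_le, ← hcos_sq]
  exact cos_sq_le_sin_sq_of_abs_sub_pi_div_two_le (hθ ▸ arcsin_le_pi_div_two _)
    (abs_floor_angle_sub_pi_div_two_le hθ_pos)

/-- After `k = ⌊π/(4θ)⌋` Grover iterations, the probability of measuring a marked
element is at least `1 - t/n`, where `θ = arcsin √(t/n)`. -/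
theorem grover_floor_iterations (n : ℕ) (hn : 2 ≤ n) (M : Finset (Fin n))
    (hM : M.Nonempty) (t : ℕ) (ht : t = M.card) (htn : t < n)
    (Ψ : EuclideanSpace ℂ (Fin n))
    (hΨ : ∀ i, Ψ i = ((Real.sqrt n)⁻¹ : ℂ))
    (O R G : EuclideanSpace ℂ (Fin n) → EuclideanSpace ℂ (Fin n))
    (hO : ∀ x, ∀ i, O x i = if i ∈ M then -x i else x i)
    (hR : ∀ x, R x = (2 * (inner ℂ Ψ x : ℂ)) • Ψ - x)
    (hG : ∀ x, G x = R (O x))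
    (θ : ℝ) (hθ : θ = Real.arcsin (Real.sqrt ((t : ℝ) / n)))
    (k : ℕ) (hk : k = ⌊Real.pi / (4 * θ)⌋₊) :
    ∑ i ∈ M, ‖(G^[k] Ψ) i‖ ^ 2 ≥ 1 - (t : ℝ) / n :=
  grover_floor_iterations_general n M hM t ht htn Ψ hΨ O R G hO hR hG θ hθ k hk
end

section
/- Let θ be a real number with 0 < θ < π/2 and let m be a positive natural number. Then Σ_{k=0}^{m−1} sin²((2k+1)θ) = m/2 − sin(4mθ)/(4 sin(2θ)). Moreover, if (m : ℝ) ≥ 1/sin(2θ), then the average (1/m) Σ_{k=0}^{m−1} sin²((2k+1)θ) ≥ 1/4. (This is the key averaging identity behind quantum search with an unknown number t of marked elements: choosing the number of Grover iterations uniformly at random in {0,…,m−1} yields success probability at least 1/4 once m ≥ 1/sin(2θ).) -/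
/-! The terms `sin²((2k+1)θ) = (1 - cos((2k+1)·2θ))/2` reduce the sum to a sum of cosines in
arithmetic progression, which telescopes after multiplication by `2 sin 2θ`, since
`2 sin x cos((2k+1)x) = sin((2k+2)x) - sin(2kx)`. The error term `sin(4mθ)/(4 sin 2θ)` is at most
`1/(4 sin 2θ) ≤ m/4` once `m sin 2θ ≥ 1`, leaving an average of at least `1/2 - 1/4`. -/

open Real Finset

theorem two_mul_sin_mul_sum_range_cos_odd_mul (x : ℝ) (m : ℕ) :
    2 * sin x * ∑ k ∈ range m, cos ((2 * k + 1) * x) = sin (2 * m * x) := by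
  rw [mul_sum]
  convert sum_range_sub (fun k : ℕ => sin (2 * k * x)) m using 2 with k
  · rw [two_mul_sin_mul_cos, show x - (2 * k + 1) * x = -(2 * k * x) by ring, sin_neg]
    push_cast
    ring_nf
  · simp

theorem sum_range_sin_sq_odd_mul {θ : ℝ} (hθ : sin (2 * θ) ≠ 0) (m : ℕ) :
    ∑ k ∈ range m, sin ((2 * k + 1) * θ) ^ 2 = m / 2 - sin (4 * m * θ) / (4 * sin (2 * θ)) := by
  have hcos : ∑ k ∈ range m, cos ((2 * k + 1) * (2 * θ)) = sin (4 * m * θ) / (2 * sin (2 * θ)) := by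
    rw [eq_div_iff (by positivity), mul_comm, two_mul_sin_mul_sum_range_cos_odd_mul]
    ring_nf
  have hsq (k : ℕ) : sin ((2 * k + 1) * θ) ^ 2 = 1 / 2 - cos ((2 * k + 1) * (2 * θ)) / 2 := by
    rw [sin_sq_eq_half_sub]
    ring_nf
  simp only [hsq, sum_sub_distrib, sum_const, card_range, nsmul_eq_mul, ← sum_div, hcos]
  ring

theorem bbht_averaging_general (θ : ℝ) (hθ0 : 0 < θ) (hθ1 : θ < Real.pi / 2)
    (m : ℕ) :
    (∑ k ∈ Finset.range m, Real.sin ((2 * (k : ℝ) + 1) * θ) ^ 2 =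
      (m : ℝ) / 2 - Real.sin (4 * m * θ) / (4 * Real.sin (2 * θ))) ∧
    (1 / Real.sin (2 * θ) ≤ (m : ℝ) →
      (1 / (m : ℝ)) * ∑ k ∈ Finset.range m, Real.sin ((2 * (k : ℝ) + 1) * θ) ^ 2
        ≥ 1 / 4) := by
  have hs : 0 < sin (2 * θ) := sin_pos_of_pos_of_lt_pi (by linarith) (by linarith)
  have hsum := sum_range_sin_sq_odd_mul hs.ne' m
  refine ⟨hsum, fun hm => ?_⟩
  have hm_pos : (0 : ℝ) < m := (one_div_pos.mpr hs).trans_le hm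
  have herr : sin (4 * m * θ) / (4 * sin (2 * θ)) ≤ m / 4 := by
    rw [div_le_iff₀ (by positivity)]
    rw [div_le_iff₀ hs] at hm
    nlinarith [sin_le_one (4 * m * θ)]
  rw [hsum, ge_iff_le, one_div_mul_eq_div, le_div_iff₀ hm_pos]
  linarith

/-- The averaging identity and bound behind quantum search with an unknown number
of marked elements (Boyer–Brassard–Høyer–Tapp). -/
theorem bbht_averaging (θ : ℝ) (hθ0 : 0 < θ) (hθ1 : θ < Real.pi / 2)
    (m : ℕ) (hm : 0 < m) :
    (∑ k ∈ Finset.range m, Real.sin ((2 * (k : ℝ) + 1) * θ) ^ 2 =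
      (m : ℝ) / 2 - Real.sin (4 * m * θ) / (4 * Real.sin (2 * θ))) ∧
    (1 / Real.sin (2 * θ) ≤ (m : ℝ) →
      (1 / (m : ℝ)) * ∑ k ∈ Finset.range m, Real.sin ((2 * (k : ℝ) + 1) * θ) ^ 2
        ≥ 1 / 4) :=
  bbht_averaging_general θ hθ0 hθ1 m
end

section
/- Let n be a positive natural number and let p : ℕ → ℝ satisfy, for every r with 1 ≤ r ≤ n, the recursion p r = 1/n + Σ_{s=r+1}^{n} p s / (s − 1). Then p r = 1/r for every r with 1 ≤ r ≤ n. (This is the key lemma in the analysis of the Dürr–Høyer quantum minimum finding algorithm: in the threshold process where the initial threshold is chosen uniformly among the n elements ranked by value, and each new threshold is chosen uniformly among the elements strictly smaller than the current one, the probability that the element of rank r is ever chosen as a threshold equals 1/r.) -/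
/-- Key lemma of the Dürr–Høyer analysis: in the threshold process, the probability
that the element of rank `r` is ever chosen as a threshold equals `1/r`. -/
theorem durr_hoyer_threshold_probability (n : ℕ) (hn : 0 < n) (p : ℕ → ℝ)
    (hp : ∀ r, 1 ≤ r → r ≤ n →
      p r = 1 / (n : ℝ) + ∑ s ∈ Finset.Icc (r + 1) n, p s / ((s : ℝ) - 1)) :
    ∀ r, 1 ≤ r → r ≤ n → p r = 1 / (r : ℝ) := by
  have key : ∀ k r, 1 ≤ r → r ≤ n → n - r ≤ k → p r = 1 / (r : ℝ) := by
    intro k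
    induction k with
    | zero =>
      intro r h1 h2 h3
      have hrn : r = n := le_antisymm h2 (by omega)
      subst hrn
      rw [hp r h1 h2, Finset.Icc_eq_empty (by omega), Finset.sum_empty, add_zero]
    | succ k ih =>
      intro r h1 h2 h3
      by_cases hrn : r = n
      · subst hrn
        rw [hp r h1 h2, Finset.Icc_eq_empty (by omega), Finset.sum_empty, add_zero]
      · have hrlt : r < n := lt_of_le_of_ne h2 hrn
        have hsucc : p (r + 1) = 1 / ((r : ℝ) + 1) := by
          have := ih (r + 1) (by omega) (by omega) (by omega)
          simpa [Nat.cast_add] using this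
        have hsplit : Finset.Icc (r + 1) n = insert (r + 1) (Finset.Icc (r + 2) n) := by
          ext x
          simp only [Finset.mem_Icc, Finset.mem_insert]
          omega
        have heq : p r = p (r + 1) + p (r + 1) / (r : ℝ) := by
          rw [hp r h1 h2, hsplit, Finset.sum_insert (by simp), hp (r + 1) (by omega) (by omega)]
          push_cast
          ring
        rw [heq, hsucc]
        have hr0 : (r : ℝ) ≠ 0 := by positivity
        field_simp
  intro r h1 h2
  exact key n r h1 h2 (by omega)
end

section
/- Fix a dimension d ≥ 1 and let μ be the uniform probability measure on the closed unit ball of EuclideanSpace ℝ (Fin d). There exists a constant C > 0, depending only on d, such that for every n ≥ 2, if X_1, …, X_n are independent random points each distributed according to μ (equivalently, integrating over the product measure μ^n), then the expected nearest-neighbour distance satisfies E[ min_{2 ≤ j ≤ n} ‖X_1 − X_j‖ ] ≤ C · n^{−1/d}. -/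
/-!
For `x` in the unit ball and `0 ≤ t ≤ 2`, the ball of radius `t / 2` around `(1 - t / 2) • x` lies
in `B(x, t) ∩ B(0, 1)`, so a uniform point of the ball lands within distance `t` of `x` with
probability at least `(t / 2) ^ d`, and beyond it with probability at most `exp (-(t / 2) ^ d)`.
Conditioning on `X₁`, independence makes the nearest-neighbour distance of `X₁` exceed `t` with
probability at most `exp (-(n - 1) (t / 2) ^ d)`, and the layer-cake formula turns this tail bound
into `E ≤ ∫₀^∞ exp (-c n t ^ d) dt = (c n) ^ (-1 / d) Γ(1 / d + 1)`.
-/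

open MeasureTheory ProbabilityTheory Metric Set Real Module

theorem integral_le_integral_of_meas_lt_le {Ω : Type*} [MeasurableSpace Ω] {μ : Measure Ω}
    {f : Ω → ℝ} (hf0 : 0 ≤ f) (hf : AEMeasurable f μ) {g : ℝ → ℝ} (hg0 : 0 ≤ g)
    (hg : IntegrableOn g (Ioi 0)) (htail : ∀ t ∈ Ioi 0, μ {ω | t < f ω} ≤ ENNReal.ofReal (g t)) :
    ∫ ω, f ω ∂μ ≤ ∫ t in Ioi 0, g t := by
  have hlintegral : ∫⁻ ω, ENNReal.ofReal (f ω) ∂μ ≤ ENNReal.ofReal (∫ t in Ioi 0, g t) := by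
    rw [lintegral_eq_lintegral_meas_lt μ (ae_of_all _ hf0) hf,
      ofReal_integral_eq_lintegral_ofReal hg (ae_of_all _ hg0)]
    exact setLIntegral_mono' measurableSet_Ioi htail
  rw [integral_eq_lintegral_of_nonneg_ae (ae_of_all _ hf0) hf.aestronglyMeasurable]
  exact ENNReal.toReal_le_of_le_ofReal (setIntegral_nonneg measurableSet_Ioi fun t _ => hg0 t)
    hlintegral

theorem measure_pi_forall_ne_mem_eq_lintegral {α : Type*} [MeasurableSpace α] (ν : Measure α)
    [SigmaFinite ν] {S : Set (α × α)} (hS : MeasurableSet S) {m : ℕ} (i : Fin (m + 1)) :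
    Measure.pi (fun _ : Fin (m + 1) => ν) {x | ∀ j ≠ i, (x i, x j) ∈ S}
      = ∫⁻ y, ν (Prod.mk y ⁻¹' S) ^ m ∂ν := by
  let A : Set (α × (Fin m → α)) := {p | ∀ k, (p.1, p.2 k) ∈ S}
  have hA : MeasurableSet A := by
    simp only [A, ofPred_forall]
    exact .iInter fun k =>
      hS.preimage (measurable_fst.prodMk ((measurable_pi_apply k).comp measurable_snd))
  have hpreimage : {x : Fin (m + 1) → α | ∀ j ≠ i, (x i, x j) ∈ S}
      = MeasurableEquiv.piFinSuccAbove (fun _ => α) i ⁻¹' A := by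
    ext x
    simp only [mem_ofPred_eq, mem_preimage, A, MeasurableEquiv.piFinSuccAbove_apply,
      Fin.insertNthEquiv_symm_apply, Fin.removeNth]
    exact ⟨fun h k => h _ (Fin.succAbove_ne i k),
      fun h j hj => by obtain ⟨k, rfl⟩ := Fin.exists_succAbove_eq hj; exact h k⟩
  have hsection (y : α) : Prod.mk y ⁻¹' A = univ.pi fun _ => Prod.mk y ⁻¹' S := by
    ext; simp [A]
  rw [hpreimage, (measurePreserving_piFinSuccAbove (fun _ => ν) i).measure_preimage
    hA.nullMeasurableSet, Measure.prod_apply hA]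
  simp_rw [hsection, Measure.pi_pi, Finset.prod_const, Finset.card_univ, Fintype.card_fin]

section NearestNeighbour

variable {ι E : Type*} [NormedAddCommGroup E]

noncomputable def nearestNeighbourDist (x : ι → E) (i : ι) : ℝ :=
  ⨅ j : {j // j ≠ i}, ‖x i - x j‖

theorem nearestNeighbourDist_nonneg (x : ι → E) (i : ι) : 0 ≤ nearestNeighbourDist x i :=
  Real.iInf_nonneg fun _ => norm_nonneg _

theorem nearestNeighbourDist_le_dist (x : ι → E) {i j : ι} (hj : j ≠ i) :
    nearestNeighbourDist x i ≤ dist (x i) (x j) :=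
  (ciInf_le ⟨0, by rintro _ ⟨k, rfl⟩; exact norm_nonneg _⟩ ⟨j, hj⟩).trans_eq (dist_eq_norm _ _).symm

theorem measurable_nearestNeighbourDist [Countable ι] [MeasurableSpace E] [MeasurableSub₂ E]
    [OpensMeasurableSpace E] (i : ι) :
    Measurable fun x : ι → E => nearestNeighbourDist x i :=
  .iInf fun _ => by fun_prop

end NearestNeighbour

section Ball

variable {E : Type*} [NormedAddCommGroup E] [NormedSpace ℝ E]

theorem closedBall_smul_subset_closedBall_inter_closedBall_one {x : E} (hx : ‖x‖ ≤ 1) {t : ℝ}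
    (ht0 : 0 ≤ t) (ht2 : t ≤ 2) :
    closedBall ((1 - t / 2) • x) (t / 2) ⊆ closedBall x t ∩ closedBall 0 1 := by
  intro z hz
  rw [mem_closedBall] at hz
  have hcenter_x : dist ((1 - t / 2) • x) x ≤ t / 2 := by
    rw [dist_eq_norm, show (1 - t / 2) • x - x = (-(t / 2)) • x by module, norm_smul, norm_neg,
      Real.norm_of_nonneg (by linarith)]
    exact mul_le_of_le_one_right (by linarith) hx
  have hcenter_0 : dist ((1 - t / 2) • x) 0 ≤ 1 - t / 2 := by
    rw [dist_zero_right, norm_smul, Real.norm_of_nonneg (by linarith)]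
    exact mul_le_of_le_one_right (by linarith) hx
  constructor
  · rw [mem_closedBall]; linarith [dist_triangle z ((1 - t / 2) • x) x]
  · rw [mem_closedBall]; linarith [dist_triangle z ((1 - t / 2) • x) 0]

variable [FiniteDimensional ℝ E] [MeasurableSpace E] (μ : Measure E) [μ.IsAddHaarMeasure]

theorem isProbabilityMeasure_cond_closedBall (x : E) {r : ℝ} (hr : 0 < r) :
    IsProbabilityMeasure (μ[|closedBall x r]) :=
  cond_isProbabilityMeasure_of_finite (measure_closedBall_pos μ x hr).ne'
    measure_closedBall_lt_top.ne

variable [BorelSpace E]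

theorem ofReal_mul_measure_closedBall_one_le_measure_inter {x : E} (hx : ‖x‖ ≤ 1) {t : ℝ}
    (ht0 : 0 ≤ t) (ht2 : t ≤ 2) :
    ENNReal.ofReal ((t / 2) ^ finrank ℝ E) * μ (closedBall 0 1)
      ≤ μ (closedBall x t ∩ closedBall 0 1) := by
  rw [← Measure.addHaar_closedBall' μ ((1 - t / 2) • x) (by linarith)]
  exact measure_mono (closedBall_smul_subset_closedBall_inter_closedBall_one hx ht0 ht2)

theorem cond_closedBall_one_lt_dist_le {x : E} (hx : ‖x‖ ≤ 1) {t : ℝ} (ht : 0 < t) :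
    μ[{z | t < dist x z} | closedBall 0 1] ≤ ENNReal.ofReal (exp (-(t / 2) ^ finrank ℝ E)) := by
  have := isProbabilityMeasure_cond_closedBall μ (0 : E) one_pos
  have hcompl : {z | t < dist x z} = (closedBall x t)ᶜ := by
    ext z; simp [dist_comm]
  rcases le_or_gt t 2 with ht2 | ht2
  · have hnear : ENNReal.ofReal ((t / 2) ^ finrank ℝ E) ≤ μ[closedBall x t | closedBall 0 1] := by
      rw [cond_apply measurableSet_closedBall, inter_comm, ← ENNReal.mul_le_iff_le_inv
        (measure_closedBall_pos μ 0 one_pos).ne' measure_closedBall_lt_top.ne, mul_comm]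
      exact ofReal_mul_measure_closedBall_one_le_measure_inter μ hx ht.le ht2
    rw [hcompl, prob_compl_eq_one_sub measurableSet_closedBall]
    calc 1 - μ[closedBall x t | closedBall 0 1]
        ≤ 1 - ENNReal.ofReal ((t / 2) ^ finrank ℝ E) := tsub_le_tsub_left hnear 1
      _ = ENNReal.ofReal (1 - (t / 2) ^ finrank ℝ E) := by
        rw [ENNReal.ofReal_sub _ (by positivity), ENNReal.ofReal_one]
      _ ≤ ENNReal.ofReal (exp (-(t / 2) ^ finrank ℝ E)) :=
        ENNReal.ofReal_le_ofReal (by linarith [add_one_le_exp (-(t / 2) ^ finrank ℝ E)])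
  · have hfar : closedBall (0 : E) 1 ∩ {z | t < dist x z} = ∅ := by
      refine eq_empty_of_forall_notMem fun z ⟨hz, hzx⟩ => ?_
      rw [mem_closedBall, dist_zero_right] at hz
      have : dist x z ≤ 2 := by linarith [dist_le_norm_add_norm x z]
      exact lt_irrefl _ ((ht2.trans hzx).trans_le this)
    rw [cond_apply measurableSet_closedBall, hfar, measure_empty, mul_zero]
    exact zero_le

theorem measure_pi_cond_closedBall_lt_nearestNeighbourDist_le {m : ℕ} (i : Fin (m + 1)) {t : ℝ}
    (ht : 0 < t) :
    Measure.pi (fun _ : Fin (m + 1) => μ[|closedBall (0 : E) 1]) {x | t < nearestNeighbourDist x i}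
      ≤ ENNReal.ofReal (exp (-(m * (t / 2) ^ finrank ℝ E))) := by
  have := isProbabilityMeasure_cond_closedBall μ (0 : E) one_pos
  have hS : MeasurableSet {p : E × E | t < dist p.1 p.2} :=
    measurableSet_lt measurable_const measurable_dist
  calc Measure.pi (fun _ => μ[|closedBall (0 : E) 1]) {x | t < nearestNeighbourDist x i}
      ≤ Measure.pi (fun _ => μ[|closedBall (0 : E) 1])
          {x | ∀ j ≠ i, (x i, x j) ∈ {p : E × E | t < dist p.1 p.2}} :=
        measure_mono fun x hx j hj => hx.trans_le (nearestNeighbourDist_le_dist x hj)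
    _ = ∫⁻ y, μ[{z | t < dist y z} | closedBall 0 1] ^ m ∂μ[|closedBall 0 1] :=
        measure_pi_forall_ne_mem_eq_lintegral _ hS i
    _ ≤ ∫⁻ _, ENNReal.ofReal (exp (-(t / 2) ^ finrank ℝ E)) ^ m ∂μ[|closedBall 0 1] := by
        refine lintegral_mono_ae ?_
        filter_upwards [ae_cond_mem measurableSet_closedBall] with y hy
        rw [mem_closedBall, dist_zero_right] at hy
        exact pow_le_pow_left' (cond_closedBall_one_lt_dist_le μ hy ht) m
    _ = ENNReal.ofReal (exp (-(m * (t / 2) ^ finrank ℝ E))) := by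
        rw [lintegral_const, measure_univ, mul_one, ← ENNReal.ofReal_pow (exp_nonneg _),
          ← exp_nat_mul, mul_neg]
end Ball

/-- Upper bound on the expected nearest-neighbour distance of `n` i.i.d. points
drawn uniformly from the closed unit ball of `ℝ^d`: it is `O(n^{-1/d})`. -/
theorem expected_nearest_neighbour_upper (d : ℕ) (hd : 1 ≤ d) :
    ∃ C : ℝ, 0 < C ∧ ∀ n : ℕ, ∀ hn : 2 ≤ n,
      (∫ x : Fin n → EuclideanSpace ℝ (Fin d),
          (⨅ j : {j : Fin n // j ≠ ⟨0, by omega⟩}, ‖x ⟨0, by omega⟩ - x (j : Fin n)‖)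
        ∂(Measure.pi fun _ : Fin n =>
            (volume (Metric.closedBall (0 : EuclideanSpace ℝ (Fin d)) 1))⁻¹ •
              volume.restrict (Metric.closedBall (0 : EuclideanSpace ℝ (Fin d)) 1)))
      ≤ C * (n : ℝ) ^ (-(1 / (d : ℝ))) := by
  have hd0 : (0 : ℝ) < d := by exact_mod_cast hd
  refine ⟨(2 ^ (d + 1) : ℝ) ^ (1 / d : ℝ) * Gamma (1 / d + 1), by positivity, fun n hn => ?_⟩
  obtain ⟨m, rfl⟩ : ∃ m, n = m + 1 := ⟨n - 1, by omega⟩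
  have hm : (1 : ℝ) ≤ m := by exact_mod_cast (by omega : 1 ≤ m)
  -- `b ≤ m / 2 ^ d` because `m ≥ 1`, i.e. `n - 1 ≥ n / 2`
  set b : ℝ := (m + 1) / 2 ^ (d + 1) with hb_def
  have hb : 0 < b := by positivity
  have htail (t : ℝ) (ht : t ∈ Ioi 0) :
      Measure.pi (fun _ => volume[|closedBall (0 : EuclideanSpace ℝ (Fin d)) 1])
        {x | t < nearestNeighbourDist x (⟨0, by omega⟩ : Fin (m + 1))}
        ≤ ENNReal.ofReal (exp (-b * t ^ (d : ℝ))) := by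
    refine (measure_pi_cond_closedBall_lt_nearestNeighbourDist_le volume _ ht).trans
      (ENNReal.ofReal_le_ofReal (exp_le_exp.2 ?_))
    rw [finrank_euclideanSpace_fin, rpow_natCast, div_pow, hb_def, pow_succ]
    have : 0 ≤ t ^ d / 2 ^ d := by have := ht.out.le; positivity
    calc -(m * (t ^ d / 2 ^ d)) ≤ -((m + 1) / 2 * (t ^ d / 2 ^ d)) := by gcongr; linarith
      _ = -((m + 1) / (2 ^ d * 2)) * t ^ d := by ring
  show ∫ x, nearestNeighbourDist x (⟨0, by omega⟩ : Fin (m + 1))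
      ∂(Measure.pi fun _ => volume[|closedBall (0 : EuclideanSpace ℝ (Fin d)) 1]) ≤ _
  calc _ ≤ ∫ t in Ioi 0, exp (-b * t ^ (d : ℝ)) :=
        integral_le_integral_of_meas_lt_le (nearestNeighbourDist_nonneg · _)
          (measurable_nearestNeighbourDist _).aemeasurable (fun _ => (exp_pos _).le)
          (by simpa using integrableOn_rpow_mul_exp_neg_mul_rpow neg_one_lt_zero hd0 hb) htail
    _ = b ^ (-1 / d : ℝ) * Gamma (1 / d + 1) := integral_exp_neg_mul_rpow hd0 hb
    _ = _ := by
        rw [hb_def, div_rpow (by positivity) (by positivity), neg_div, rpow_neg (by positivity),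
          rpow_neg (by positivity)]
        push_cast
        rw [rpow_neg (by positivity)]
        field_simp
end
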